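/- Let F_2 be the free group on two generators a, b and let t be the automorphism of F_2 with t(a) = a^2 b and t(b) = a b. Let G = F_2 ⋊_t ℤ be the corresponding semidirect product (the mapping torus of t). Then ⋂_{i≥1} γ_i(G) equals the canonical copy of F_2 inside G; in particular γ_i(G) = F_2 for all i ≥ 2 and G is not residually nilpotent. -/

import Mathlib

/-! Since `ℤ` is abelian, `γ₂(G) ≤ F₂`. Conversely `⁅x, t⁆ = x · t(x)⁻¹` for `x ∈ F₂`, and these
elements already generate `F₂` (they include `b`, from `x = a⁻¹b`, and `b⁻¹ab`, from `x = b⁻¹`).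
Hence `⁅F₂, G⁆ = F₂`, and the lower central series is constantly `F₂` from `γ₂` on. -/

open SemidirectProduct Subgroup
open scoped commutatorElement

theorem Subgroup.top_lowerCentralSeries_succ_eq {G : Type*} [Group G] {K : Subgroup G}
    (hG : _root_.commutator G ≤ K) (hK : ⁅K, ⊤⁆ = K) (n : ℕ) :
    (⊤ : Subgroup G).lowerCentralSeries (n + 1) = K := by
  induction n with
  | zero =>
    refine le_antisymm hG ?_
    calc K = ⁅K, ⊤⁆ := hK.symm
      _ ≤ ⁅⊤, ⊤⁆ := commutator_mono le_top le_rfl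
  | succ n ih => rw [lowerCentralSeries_succ, ih, hK]

theorem Subgroup.iInf_top_lowerCentralSeries_eq {G : Type*} [Group G] {K : Subgroup G}
    (hG : _root_.commutator G ≤ K) (hK : ⁅K, ⊤⁆ = K) :
    ⨅ i, (⊤ : Subgroup G).lowerCentralSeries i = K := by
  refine le_antisymm ((iInf_le _ 1).trans (top_lowerCentralSeries_succ_eq hG hK 0).le) ?_
  refine le_iInf fun i => ?_
  cases i with
  | zero => exact le_top
  | succ n => exact (top_lowerCentralSeries_succ_eq hG hK n).ge

namespace SemidirectProduct

theorem commutator_le_range_inl {N G : Type*} [Group N] [CommGroup G] {φ : G →* MulAut N} :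
    commutator (N ⋊[φ] G) ≤ (inl : N →* N ⋊[φ] G).range := by
  rw [range_inl_eq_ker_rightHom]
  exact Abelianization.commutator_subset_ker rightHom

variable {N G : Type*} [Group N] [Group G] {φ : G →* MulAut N}

theorem inl_mul_inv_apply_eq_commutatorElement (x : N) (g : G) :
    (inl (x * (φ g x)⁻¹) : N ⋊[φ] G) = ⁅(inl x : N ⋊[φ] G), inr g⁆ := by
  ext <;> simp [commutatorElement_def]

theorem commutator_range_inl_top_eq (g : G)
    (hg : closure (Set.range fun x : N => x * (φ g x)⁻¹) = ⊤) :
    ⁅(inl : N →* N ⋊[φ] G).range, ⊤⁆ = (inl : N →* N ⋊[φ] G).range := by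
  refine le_antisymm (range_inl_eq_ker_rightHom (φ := φ) ▸ commutator_le_left _ _) ?_
  conv_lhs => rw [MonoidHom.range_eq_map, ← hg, MonoidHom.map_closure]
  rw [closure_le]
  rintro _ ⟨_, ⟨x, rfl⟩, rfl⟩
  rw [SetLike.mem_coe, inl_mul_inv_apply_eq_commutatorElement]
  exact commutator_mem_commutator ⟨x, rfl⟩ (mem_top _)

end SemidirectProduct

theorem closure_range_mul_inv_apply_eq_top (t : MulAut (FreeGroup (Fin 2)))
    (ha : t (FreeGroup.of 0) = FreeGroup.of 0 * FreeGroup.of 0 * FreeGroup.of 1)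
    (hb : t (FreeGroup.of 1) = FreeGroup.of 0 * FreeGroup.of 1) :
    closure (Set.range fun x => x * (t x)⁻¹) = ⊤ := by
  set a : FreeGroup (Fin 2) := FreeGroup.of 0
  set b : FreeGroup (Fin 2) := FreeGroup.of 1
  set S : Subgroup (FreeGroup (Fin 2)) := closure (Set.range fun x => x * (t x)⁻¹)
  have hb_mem : b ∈ S := by
    have h : a⁻¹ * b * (t (a⁻¹ * b))⁻¹ = b := by rw [map_mul, map_inv, ha, hb]; group
    exact h ▸ subset_closure (Set.mem_range_self _)
  have hconj_mem : b⁻¹ * a * b ∈ S := by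
    have h : b⁻¹ * (t b⁻¹)⁻¹ = b⁻¹ * a * b := by rw [map_inv, hb]; group
    exact h ▸ subset_closure (Set.mem_range_self _)
  have ha_mem : a ∈ S := by
    convert mul_mem (mul_mem hb_mem hconj_mem) (inv_mem hb_mem) using 1
    group
  rw [eq_top_iff, ← FreeGroup.closure_range_of, closure_le]
  rintro _ ⟨i, rfl⟩
  fin_cases i
  · exact ha_mem
  · exact hb_mem

/-- let `t` be the automorphism of the free group `F₂ = ⟨a, b⟩` with
`t(a) = a²b` and `t(b) = ab`, and let `G = F₂ ⋊_t ℤ` be the corresponding mapping torus.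
Then `⋂_{i ≥ 1} γ_i(G)` is the canonical copy of `F₂` in `G`; in particular
`γ_i(G) = F₂` for all `i ≥ 2` (with `γ₁(G) = G`, i.e. `γ_i(G) = lowerCentralSeries G (i-1)`)
and `G` is not residually nilpotent. -/
theorem mapping_torus_not_residually_nilpotent
    (t : MulAut (FreeGroup (Fin 2)))
    (ha : t (FreeGroup.of 0) = FreeGroup.of 0 * FreeGroup.of 0 * FreeGroup.of 1)
    (hb : t (FreeGroup.of 1) = FreeGroup.of 0 * FreeGroup.of 1) :
    (∀ i : ℕ, 2 ≤ i →
      (⊤ : Subgroup (FreeGroup (Fin 2) ⋊[zpowersHom _ t] Multiplicative ℤ)).lowerCentralSeries (i - 1) =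
        (SemidirectProduct.inl :
          FreeGroup (Fin 2) →* FreeGroup (Fin 2) ⋊[zpowersHom _ t] Multiplicative ℤ).range) ∧
    (⨅ i : ℕ,
      (⊤ : Subgroup (FreeGroup (Fin 2) ⋊[zpowersHom _ t] Multiplicative ℤ)).lowerCentralSeries i) =
        (SemidirectProduct.inl :
          FreeGroup (Fin 2) →* FreeGroup (Fin 2) ⋊[zpowersHom _ t] Multiplicative ℤ).range ∧
    ¬ (⨅ i : ℕ,
        (⊤ : Subgroup (FreeGroup (Fin 2) ⋊[zpowersHom _ t] Multiplicative ℤ)).lowerCentralSeries i) = ⊥ := by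
  have hK := commutator_range_inl_top_eq (φ := zpowersHom _ t) (Multiplicative.ofAdd 1)
    (by simpa using closure_range_mul_inv_apply_eq_top t ha hb)
  have hinf := iInf_top_lowerCentralSeries_eq commutator_le_range_inl hK
  refine ⟨fun i hi => ?_, hinf, ?_⟩
  · obtain ⟨n, rfl⟩ := Nat.exists_eq_add_of_le' hi
    exact top_lowerCentralSeries_succ_eq commutator_le_range_inl hK n
  · rw [hinf, MonoidHom.range_eq_bot_iff]
    intro h
    refine FreeGroup.of_ne_one (0 : Fin 2) (inl_injective (φ := zpowersHom _ t) ?_)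
    simpa using DFunLike.congr_fun h (FreeGroup.of 0)
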